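/- arXiv:2504.13013 — 12 statements merged into one kernel-verified Lean document; each statement's English description precedes it below -/
import Mathlib

section
/- For a triangle with side lengths 0 < x ≤ y ≤ z satisfying the triangle inequality z < x + y, the quantity min{z/y, y/x, 1 + (y² - x²)/z²} is strictly less than √2. -/
theorem stmt_0 (x y z : ℝ) (hx : 0 < x) (hxy : x ≤ y) (hyz : y ≤ z) (htri : z < x + y) :
    min (z / y) (min (y / x) (1 + (y ^ 2 - x ^ 2) / z ^ 2)) < Real.sqrt 2 := by
  by_contra h
  push_neg at h
  have hy : 0 < y := lt_of_lt_of_le hx hxy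
  have hz : 0 < z := lt_of_lt_of_le hy hyz
  set s := Real.sqrt 2 with hs
  have hs2 : s ^ 2 = 2 := Real.sq_sqrt (by norm_num)
  have hs1 : 1 < s := by
    nlinarith [Real.sqrt_nonneg 2]
  have h1 : s ≤ z / y := le_trans h (min_le_left _ _)
  have h2 : s ≤ y / x := le_trans h (le_trans (min_le_right _ _) (min_le_left _ _))
  have h3 : s ≤ 1 + (y ^ 2 - x ^ 2) / z ^ 2 :=
    le_trans h (le_trans (min_le_right _ _) (min_le_right _ _))
  have hz1 : s * y ≤ z := by
    rw [le_div_iff₀ hy] at h1; linarith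
  have h3' : (s - 1) * z ^ 2 ≤ y ^ 2 - x ^ 2 := by
    have := (le_div_iff₀ (by positivity : (0:ℝ) < z ^ 2)).mp (by linarith : s - 1 ≤ (y ^ 2 - x ^ 2) / z ^ 2)
    linarith
  have hsy : 0 ≤ s * y := by nlinarith
  have hz2 : 2 * y ^ 2 ≤ z ^ 2 := by
    nlinarith [mul_le_mul hz1 hz1 hsy hz.le]
  have hx2 : x ^ 2 ≤ ((s - 1) * y) ^ 2 := by
    have : (s - 1) * (2 * y ^ 2) ≤ y ^ 2 - x ^ 2 := by
      nlinarith
    nlinarith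
  have hxle : x ≤ (s - 1) * y := by
    have h0 : 0 ≤ (s - 1) * y := mul_nonneg (by linarith) hy.le
    nlinarith
  linarith
end

section
/- For a triangle with side lengths 0 < x < y < z satisfying z < x + y, one has min{z/y, y/x, 1 + (y²-x²)/z²} < min{z/x, 1 + (z²-x²)/y², 1 + (z²-y²)/x²}. In particular z/y < 1 + (z²-y²)/x². -/
theorem stmt_1 (x y z : ℝ) (hx : 0 < x) (hxy : x < y) (hyz : y < z) (htri : z < x + y) :
    min (z / y) (min (y / x) (1 + (y ^ 2 - x ^ 2) / z ^ 2)) <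
      min (z / x) (min (1 + (z ^ 2 - x ^ 2) / y ^ 2) (1 + (z ^ 2 - y ^ 2) / x ^ 2)) ∧
    z / y < 1 + (z ^ 2 - y ^ 2) / x ^ 2 := by
  have hy : 0 < y := hx.trans hxy
  have hz : 0 < z := hy.trans hyz
  have h1 : z / y < z / x := by
    apply div_lt_div_of_pos_left hz hx hxy
  have h2 : z / y < 1 + (z ^ 2 - x ^ 2) / y ^ 2 := by
    have key : 1 + (z ^ 2 - x ^ 2) / y ^ 2 - z / y = (y ^ 2 + z ^ 2 - x ^ 2 - z * y) / y ^ 2 := by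
      field_simp; ring
    have hnum : 0 < y ^ 2 + z ^ 2 - x ^ 2 - z * y := by nlinarith
    have := div_pos hnum (by positivity : (0:ℝ) < y ^ 2)
    linarith [key ▸ this]
  have h3 : z / y < 1 + (z ^ 2 - y ^ 2) / x ^ 2 := by
    have key : 1 + (z ^ 2 - y ^ 2) / x ^ 2 - z / y = (x ^ 2 * y + y * (z ^ 2 - y ^ 2) - z * x ^ 2) / (x ^ 2 * y) := by
      field_simp
    have hnum : 0 < x ^ 2 * y + y * (z ^ 2 - y ^ 2) - z * x ^ 2 := by
      have hf : 0 < (z - y) * (y * (z + y) - x ^ 2) := by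
        apply mul_pos (by linarith)
        nlinarith
      nlinarith [hf]
    have := div_pos hnum (by positivity : (0:ℝ) < x ^ 2 * y)
    linarith [key ▸ this]
  refine ⟨lt_min (lt_of_le_of_lt (min_le_left _ _) h1)
    (lt_min (lt_of_le_of_lt (min_le_left _ _) h2) (lt_of_le_of_lt (min_le_left _ _) h3)), h3⟩
end

section
/- For real numbers r > 1 and θ ∈ (π/2, π), the inequality (r² - 2r·cos θ - 1)/√((r² - 1)² + 4r²·cos²θ) ≤ √2 holds, with equality if and only if cos θ = (1/r - r)/2. -/
open Real

theorem stmt_3 (r θ : ℝ) (hr : 1 < r) (hθ : θ ∈ Set.Ioo (π / 2) π) :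
    (r ^ 2 - 2 * r * cos θ - 1) / Real.sqrt ((r ^ 2 - 1) ^ 2 + 4 * r ^ 2 * cos θ ^ 2) ≤
      Real.sqrt 2 ∧
    ((r ^ 2 - 2 * r * cos θ - 1) / Real.sqrt ((r ^ 2 - 1) ^ 2 + 4 * r ^ 2 * cos θ ^ 2) =
        Real.sqrt 2 ↔ cos θ = (1 / r - r) / 2) := by
  obtain ⟨h1, h2⟩ := hθ
  have hc : cos θ < 0 := Real.cos_neg_of_pi_div_two_lt_of_lt h1 (by linarith [Real.pi_pos])
  set a : ℝ := r ^ 2 - 1 with ha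
  set b : ℝ := -(2 * r * cos θ) with hb
  have hr0 : (0:ℝ) < r := by linarith
  have hapos : 0 < a := by nlinarith
  have hbpos : 0 < b := by nlinarith
  have hq : 0 < a ^ 2 + b ^ 2 := by positivity
  have hden : (r ^ 2 - 1) ^ 2 + 4 * r ^ 2 * cos θ ^ 2 = a ^ 2 + b ^ 2 := by
    rw [ha, hb]; ring
  have hnum : r ^ 2 - 2 * r * cos θ - 1 = a + b := by rw [ha, hb]; ring
  rw [hden, hnum]
  have hs : 0 < Real.sqrt (a ^ 2 + b ^ 2) := Real.sqrt_pos.mpr hq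
  have hle : a + b ≤ Real.sqrt 2 * Real.sqrt (a ^ 2 + b ^ 2) := by
    calc a + b = Real.sqrt ((a + b) ^ 2) := (Real.sqrt_sq (by linarith)).symm
      _ ≤ Real.sqrt (2 * (a ^ 2 + b ^ 2)) :=
          Real.sqrt_le_sqrt (by nlinarith [sq_nonneg (a - b)])
      _ = Real.sqrt 2 * Real.sqrt (a ^ 2 + b ^ 2) := Real.sqrt_mul (by norm_num) _
  constructor
  · rw [div_le_iff₀ hs]; exact hle
  constructor
  · intro h
    rw [div_eq_iff (ne_of_gt hs)] at h
    have h2' : (a + b) ^ 2 = 2 * (a ^ 2 + b ^ 2) := by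
      have := Real.sq_sqrt hq.le
      have h2s := Real.sq_sqrt (by norm_num : (0:ℝ) ≤ 2)
      calc (a + b) ^ 2 = (Real.sqrt 2 * Real.sqrt (a ^ 2 + b ^ 2)) ^ 2 := by rw [h]
        _ = 2 * (a ^ 2 + b ^ 2) := by rw [mul_pow, h2s, this]
    have hab : a = b := by nlinarith [sq_nonneg (a - b)]
    have : 2 * r * cos θ = 1 - r ^ 2 := by
      rw [ha, hb] at hab; linarith
    field_simp
    linarith
  · intro h
    have hab : b = a := by
      rw [ha, hb, h]; field_simp; ring
    rw [hab]
    have : Real.sqrt (a ^ 2 + a ^ 2) = Real.sqrt 2 * a := by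
      rw [show a ^ 2 + a ^ 2 = 2 * a ^ 2 by ring, Real.sqrt_mul (by norm_num),
        Real.sqrt_sq hapos.le]
    rw [this]
    rw [div_eq_iff (by positivity)]
    nlinarith [Real.sq_sqrt (by norm_num : (0:ℝ) ≤ 2), Real.sqrt_nonneg 2]
end

section
/- For real numbers r > 1 and y ∈ (0, 2), the equation (r² + ry + 1)²/((r² + 1)² - r²y²) = r² holds if and only if y = r − 1/r. Moreover, y = r − 1/r lies in (0, 2) if and only if 1 < r < 1 + √2. -/
theorem stmt_4 (r : ℝ) (hr : 1 < r) :
    (∀ y ∈ Set.Ioo (0 : ℝ) 2,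
      ((r ^ 2 + r * y + 1) ^ 2 / ((r ^ 2 + 1) ^ 2 - r ^ 2 * y ^ 2) = r ^ 2 ↔ y = r - 1 / r)) ∧
    (r - 1 / r ∈ Set.Ioo (0 : ℝ) 2 ↔ 1 < r ∧ r < 1 + Real.sqrt 2) := by
  have hr0 : 0 < r := by linarith
  have hrne : r ≠ 0 := ne_of_gt hr0
  constructor
  · rintro y ⟨hy0, hy2⟩
    have hden : 0 < (r ^ 2 + 1) ^ 2 - r ^ 2 * y ^ 2 := by
      nlinarith [mul_pos (show 0 < r ^ 2 + 1 - r * y by nlinarith [sq_nonneg (r - 1)])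
        (show 0 < r ^ 2 + 1 + r * y by positivity)]
    constructor
    · intro h
      have h' : (r ^ 2 + r * y + 1) ^ 2 = r ^ 2 * ((r ^ 2 + 1) ^ 2 - r ^ 2 * y ^ 2) := by
        field_simp at h
        linarith
      have hsq : (r * y + 1) ^ 2 = (r ^ 2) ^ 2 := by nlinarith
      have hpos : 0 < r * y + 1 + r ^ 2 := by positivity
      have : r * y + 1 = r ^ 2 := by nlinarith
      field_simp
      linarith
    · intro h
      subst h
      have h1 : r * (r - 1 / r) = r ^ 2 - 1 := by field_simp
      rw [h1]
      have h2 : (r ^ 2 + 1) ^ 2 - (r ^ 2 - 1) ^ 2 = 4 * r ^ 2 := by ring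
      have h3 : r ^ 2 * (r - 1 / r) ^ 2 = (r ^ 2 - 1) ^ 2 := by field_simp
      rw [h3]
      rw [show (r ^ 2 + (r ^ 2 - 1) + 1) = 2 * r ^ 2 by ring]
      rw [h2]
      field_simp
      ring
  · have hs2 : Real.sqrt 2 ^ 2 = 2 := Real.sq_sqrt (by norm_num)
    have hs2pos : 0 < Real.sqrt 2 := Real.sqrt_pos.mpr (by norm_num)
    constructor
    · rintro ⟨h1, h2⟩
      refine ⟨hr, ?_⟩
      have h2' : r * r - 1 < 2 * r := by
        have := mul_lt_mul_of_pos_left h2 hr0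
        have hx : r * (r - 1 / r) = r * r - 1 := by field_simp
        nlinarith
      by_contra hc
      push_neg at hc
      nlinarith [mul_nonneg (show (0:ℝ) ≤ r - 1 - Real.sqrt 2 by linarith)
        (show (0:ℝ) ≤ r - 1 + Real.sqrt 2 by linarith)]
    · rintro ⟨_, h2⟩
      constructor
      · have : 1 / r < 1 := by rw [div_lt_one hr0]; linarith
        linarith
      · have key : r ^ 2 - 2 * r - 1 < 0 := by nlinarith
        have hinv : 0 < 1 / r := by positivity
        rcases le_or_gt r 2 with h | h
        · linarith
        · have : r - 2 < 1 / r := by rw [lt_div_iff₀ hr0]; nlinarith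
          linarith
end

section
/- For real numbers r ∈ (1, √2] and y ∈ (0, 2), the equation (r² + ry − 1)²/((r² − 1)² + r²y²) = r² holds if and only if y = 1/r − √(2 − r²) or y = 1/r + √(2 − r²). Moreover, for r ∈ (1, √2] both of these values lie in (0, 2). -/
theorem stmt_5 (r : ℝ) (hr : r ∈ Set.Ioc 1 (Real.sqrt 2)) :
    (∀ y ∈ Set.Ioo (0 : ℝ) 2,
      ((r ^ 2 + r * y - 1) ^ 2 / ((r ^ 2 - 1) ^ 2 + r ^ 2 * y ^ 2) = r ^ 2 ↔
        y = 1 / r - Real.sqrt (2 - r ^ 2) ∨ y = 1 / r + Real.sqrt (2 - r ^ 2))) ∧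
    1 / r - Real.sqrt (2 - r ^ 2) ∈ Set.Ioo (0 : ℝ) 2 ∧
    1 / r + Real.sqrt (2 - r ^ 2) ∈ Set.Ioo (0 : ℝ) 2 := by
  obtain ⟨hr1, hr2⟩ := hr
  have hr0 : (0:ℝ) < r := by linarith
  have hr2' : r ^ 2 ≤ 2 := by
    nlinarith [Real.sq_sqrt (by norm_num : (2:ℝ) ≥ 0), Real.sqrt_nonneg 2]
  set s := Real.sqrt (2 - r ^ 2) with hs
  have hs0 : 0 ≤ s := Real.sqrt_nonneg _
  have hs2 : s ^ 2 = 2 - r ^ 2 := Real.sq_sqrt (by linarith)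
  have hrr : r ^ 2 - 1 > 0 := by nlinarith
  refine ⟨?_, ?_, ?_⟩
  · intro y hy
    have hden : (r ^ 2 - 1) ^ 2 + r ^ 2 * y ^ 2 ≠ 0 := by positivity
    rw [div_eq_iff hden]
    constructor
    · intro h
      have key : r ^ 2 * y ^ 2 - 2 * r * y + (r ^ 2 - 1) ^ 2 = 0 := by
        have h2 : (r ^ 2 - 1) * (r ^ 2 * y ^ 2 - 2 * r * y + (r ^ 2 - 1) ^ 2) = 0 := by
          linarith [h]
        have := mul_eq_zero.mp h2
        rcases this with h3 | h3
        · linarith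
        · exact h3
      have key2 : (r * y - 1 - r * s) * (r * y - 1 + r * s) = 0 := by nlinarith
      rcases mul_eq_zero.mp key2 with h3 | h3
      · right; field_simp; linarith
      · left; field_simp; linarith
    · rintro (rfl | rfl) <;> field_simp <;> nlinarith [hs2, hs0]
  · constructor
    · have : s ^ 2 < (1 / r) ^ 2 := by
        rw [div_pow, one_pow]
        rw [lt_div_iff₀ (by positivity)]
        nlinarith
      nlinarith [sq_nonneg (1 / r - s), sq_nonneg (1 / r + s), (by positivity : (0:ℝ) < 1 / r)]
    · have h1 : 1 / r < 1 := by rw [div_lt_one hr0]; linarith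
      nlinarith [hs0, hs2]
  · constructor
    · positivity
    · have h1 : s < 2 - 1 / r := by
        have hlt : s ^ 2 < (2 - 1 / r) ^ 2 := by
          have : (2 - 1 / r) ^ 2 = 4 - 4 / r + 1 / r ^ 2 := by field_simp; ring
          rw [this, hs2]
          rw [show (4:ℝ) - 4 / r + 1 / r ^ 2 = (4 * r ^ 2 - 4 * r + 1) / r ^ 2 by field_simp]
          rw [lt_div_iff₀ (by positivity)]
          nlinarith [sq_nonneg (r - 1), sq_nonneg (r ^ 2 - 1)]
        nlinarith [hs0, (by rw [div_lt_one hr0]; linarith : 1 / r < 1)]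
      linarith
end

section
/- For real numbers r > 1 and y ∈ (0, 2), the equation (r² + ry − 1)²/((r² − 1)² + r²y²) = (r² + ry + 1)²/((r² + 1)² − r²y²) holds if and only if y = (−r² + √(r⁴ + 6r² − 7) + 1)/(2r). Moreover, for r > 1 this value lies in (0, 2). -/
theorem stmt_6 (r : ℝ) (hr : 1 < r) :
    (∀ y ∈ Set.Ioo (0 : ℝ) 2,
      ((r ^ 2 + r * y - 1) ^ 2 / ((r ^ 2 - 1) ^ 2 + r ^ 2 * y ^ 2) =
          (r ^ 2 + r * y + 1) ^ 2 / ((r ^ 2 + 1) ^ 2 - r ^ 2 * y ^ 2) ↔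
        y = (-r ^ 2 + Real.sqrt (r ^ 4 + 6 * r ^ 2 - 7) + 1) / (2 * r))) ∧
    (-r ^ 2 + Real.sqrt (r ^ 4 + 6 * r ^ 2 - 7) + 1) / (2 * r) ∈ Set.Ioo (0 : ℝ) 2 := by
  have hr0 : (0:ℝ) < r := by linarith
  have hs1 : (0:ℝ) < r ^ 2 - 1 := by nlinarith
  have hd : (0:ℝ) ≤ r ^ 4 + 6 * r ^ 2 - 7 := by nlinarith [mul_pos hs1 (show (0:ℝ) < r^2+7 by nlinarith)]
  set q : ℝ := Real.sqrt (r ^ 4 + 6 * r ^ 2 - 7) with hq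
  have hq0 : 0 ≤ q := Real.sqrt_nonneg _
  have hq2 : q ^ 2 = r ^ 4 + 6 * r ^ 2 - 7 := Real.sq_sqrt hd
  have hqgt : r ^ 2 - 1 < q := by nlinarith
  have hqlt : q < 4 * r + r ^ 2 - 1 := by nlinarith
  have h2r : (2 * r) ≠ 0 := by positivity
  constructor
  · intro y hy
    obtain ⟨hy0, hy2⟩ := hy
    have hry : r * y < 2 * r := by nlinarith
    have hf2 : (0:ℝ) < r ^ 2 + 1 - r * y := by nlinarith [sq_nonneg (r - 1)]
    have hf3 : (0:ℝ) < r ^ 2 + 1 + r * y := by nlinarith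
    have hD1 : (0:ℝ) < (r ^ 2 - 1) ^ 2 + r ^ 2 * y ^ 2 := by positivity
    have hD2 : (0:ℝ) < (r ^ 2 + 1) ^ 2 - r ^ 2 * y ^ 2 := by nlinarith [mul_pos hf2 hf3]
    rw [div_eq_div_iff hD1.ne' hD2.ne']
    constructor
    · intro h
      have hfac : (r ^ 2 * y ^ 2 + r * (r ^ 2 - 1) * y - 2 * (r ^ 2 - 1)) *
          (-2 * r * y * (r * y + r ^ 2 + 1)) = 0 := by linear_combination h
      have hg : -2 * r * y * (r * y + r ^ 2 + 1) < 0 := by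
        nlinarith [mul_pos (mul_pos hr0 hy0) (show (0:ℝ) < r * y + r ^ 2 + 1 by nlinarith)]
      have hqzero : r ^ 2 * y ^ 2 + r * (r ^ 2 - 1) * y - 2 * (r ^ 2 - 1) = 0 := by
        rcases mul_eq_zero.mp hfac with h' | h'
        · exact h'
        · exact absurd h' hg.ne
      have hsq : (2 * r * y + r ^ 2 - 1) ^ 2 = q ^ 2 := by
        rw [hq2]; linear_combination 4 * hqzero
      have hpos : 0 < 2 * r * y + r ^ 2 - 1 := by nlinarith
      have hfac2 : (2 * r * y + r ^ 2 - 1 - q) * (2 * r * y + r ^ 2 - 1 + q) = 0 := by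
        linear_combination hsq
      have heq : 2 * r * y + r ^ 2 - 1 = q := by
        rcases mul_eq_zero.mp hfac2 with h' | h'
        · linarith
        · linarith
      rw [eq_div_iff h2r]
      linear_combination heq
    · intro h
      have hy' : 2 * r * y = -r ^ 2 + q + 1 := by
        rw [h, mul_div_cancel₀ _ h2r]
      have hsq2 : (2 * r * y) ^ 2 = (-r ^ 2 + q + 1) ^ 2 := by rw [hy']
      have hqzero : r ^ 2 * y ^ 2 + r * (r ^ 2 - 1) * y - 2 * (r ^ 2 - 1) = 0 := by
        linear_combination hsq2 / 4 + (r ^ 2 - 1) / 2 * hy' + hq2 / 4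
      linear_combination (-2 * r * y * (r * y + r ^ 2 + 1)) * hqzero
  · constructor
    · apply div_pos (by linarith) (by linarith)
    · rw [div_lt_iff₀ (by linarith)]
      linarith
end

section
/- Let z₁, z₂ > 0 with z₁² + z₂² < 1, let r > 1 be the side-length ratio and θ ∈ (π/2, π) the larger interior angle of the parallelogram with vertices ±(1,0) and ±(z₁, z₂). Then z₁ = (r² − 1)/(1 + r² − 2r cos θ) and z₂ = 2r sin θ/(1 + r² − 2r cos θ). -/
open Real

/-!
With `x = a - v` and `y = -a - v` we have `r = ‖y‖ / ‖x‖` and `θ = ∠(x, y)`, hence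
`r cos θ = ⟪x, y⟫ / ‖x‖²` and `r sin θ = |x₀ y₁ - x₁ y₀| / ‖x‖²`; in coordinates these are
`(z₁² + z₂² - 1) / s²` and `2 z₂ / s²` with `s² = (1 - z₁)² + z₂²`. In complex terms
`w = r e^{-iθ} = (-1 - v) / (1 - v)`, and the claimed formulas are the inversion
`v = (w + 1) / (w - 1)`.
-/

namespace InnerProductGeometry

variable {V : Type*} [NormedAddCommGroup V] [InnerProductSpace ℝ V]

theorem norm_div_norm_mul_cos_angle (x y : V) :
    ‖y‖ / ‖x‖ * cos (angle x y) = inner ℝ x y / ‖x‖ ^ 2 := by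
  rcases eq_or_ne x 0 with rfl | hx
  · simp
  rw [← cos_angle_mul_norm_mul_norm]
  field_simp [norm_ne_zero_iff.mpr hx]

theorem norm_div_norm_mul_sin_angle (x y : V) :
    ‖y‖ / ‖x‖ * sin (angle x y) =
      √(inner ℝ x x * inner ℝ y y - inner ℝ x y * inner ℝ x y) / ‖x‖ ^ 2 := by
  rcases eq_or_ne x 0 with rfl | hx
  · simp
  rw [← sin_angle_mul_norm_mul_norm]
  field_simp [norm_ne_zero_iff.mpr hx]

end InnerProductGeometry

theorem EuclideanSpace.inner_self_mul_inner_self_sub_inner_mul_inner_fin_two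
    (x y : EuclideanSpace ℝ (Fin 2)) :
    inner ℝ x x * inner ℝ y y - inner ℝ x y * inner ℝ x y = (x 0 * y 1 - x 1 * y 0) ^ 2 := by
  simp only [PiLp.inner_apply, Fin.sum_univ_two, RCLike.inner_apply, conj_trivial]
  ring

theorem eq_div_of_mul_cos_of_mul_sin {z₁ z₂ r θ : ℝ} (hs : (1 - z₁) ^ 2 + z₂ ^ 2 ≠ 0)
    (hc : r * cos θ = (z₁ ^ 2 + z₂ ^ 2 - 1) / ((1 - z₁) ^ 2 + z₂ ^ 2))
    (hd : r * sin θ = 2 * z₂ / ((1 - z₁) ^ 2 + z₂ ^ 2)) :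
    z₁ = (r ^ 2 - 1) / (1 + r ^ 2 - 2 * r * cos θ) ∧
    z₂ = 2 * r * sin θ / (1 + r ^ 2 - 2 * r * cos θ) := by
  have hr : r ^ 2 = (r * cos θ) ^ 2 + (r * sin θ) ^ 2 := by
    linear_combination (-r ^ 2) * sin_sq_add_cos_sq θ
  have hD : 1 + r ^ 2 - 2 * r * cos θ = 4 / ((1 - z₁) ^ 2 + z₂ ^ 2) := by
    rw [hr, mul_assoc, hc, hd]
    field_simp
    ring
  rw [hD, hr, hc, mul_assoc, hd]
  constructor <;> field_simp <;> ring

theorem stmt_7_general (z₁ z₂ : ℝ) (hz₂ : 0 < z₂)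
    (a v : EuclideanSpace ℝ (Fin 2)) (ha : a = !₂[1, 0]) (hv : v = !₂[z₁, z₂])
    (r θ : ℝ)
    (hr : r = ‖v + a‖ / ‖v - a‖)
    (hθ : θ = InnerProductGeometry.angle (a - v) (-a - v)) :
    z₁ = (r ^ 2 - 1) / (1 + r ^ 2 - 2 * r * cos θ) ∧
    z₂ = 2 * r * sin θ / (1 + r ^ 2 - 2 * r * cos θ) := by
  have hr' : r = ‖-a - v‖ / ‖a - v‖ := by
    rw [hr, norm_sub_rev v a, ← norm_neg (v + a), neg_add_rev, ← sub_eq_add_neg]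
  have hnorm : ‖a - v‖ ^ 2 = (1 - z₁) ^ 2 + z₂ ^ 2 := by
    rw [EuclideanSpace.norm_sq_eq]; simp [ha, hv, Fin.sum_univ_two]
  have hinner : inner ℝ (a - v) (-a - v) = z₁ ^ 2 + z₂ ^ 2 - 1 := by
    simp only [ha, hv, PiLp.inner_apply, PiLp.sub_apply, PiLp.neg_apply, RCLike.inner_apply,
      conj_trivial, Fin.sum_univ_two, Matrix.cons_val_zero, Matrix.cons_val_one]
    ring
  have hcross : ((a - v) 0 * (-a - v) 1 - (a - v) 1 * (-a - v) 0) ^ 2 = (2 * z₂) ^ 2 := by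
    simp only [ha, hv, PiLp.sub_apply, PiLp.neg_apply, Matrix.cons_val_zero, Matrix.cons_val_one]
    ring
  apply eq_div_of_mul_cos_of_mul_sin (by positivity)
  · rw [hr', hθ, InnerProductGeometry.norm_div_norm_mul_cos_angle, hinner, hnorm]
  · rw [hr', hθ, InnerProductGeometry.norm_div_norm_mul_sin_angle,
      EuclideanSpace.inner_self_mul_inner_self_sub_inner_mul_inner_fin_two, hcross,
      sqrt_sq (by positivity), hnorm]

theorem stmt_7 (z₁ z₂ : ℝ) (hz₁ : 0 < z₁) (hz₂ : 0 < z₂) (hsum : z₁ ^ 2 + z₂ ^ 2 < 1)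
    (a v : EuclideanSpace ℝ (Fin 2)) (ha : a = !₂[1, 0]) (hv : v = !₂[z₁, z₂])
    (r θ : ℝ)
    (hr : r = ‖v + a‖ / ‖v - a‖)
    (hθ : θ = InnerProductGeometry.angle (a - v) (-a - v)) :
    z₁ = (r ^ 2 - 1) / (1 + r ^ 2 - 2 * r * cos θ) ∧
    z₂ = 2 * r * sin θ / (1 + r ^ 2 - 2 * r * cos θ) :=
  stmt_7_general z₁ z₂ hz₂ a v ha hv r θ hr hθ
end

section
/- Let z₁, z₂ > 0 with z₁² + z₂² < 1, and set r and θ as the side-length ratio and larger interior angle of the parallelogram with vertices ±(1,0), ±(z₁,z₂). Then 1 − z₁² − z₂² + 2z₁ = 2(r² − 2r cos θ − 1)/(1 + r² − 2r cos θ) and (1 + z₁² − z₂²)² + (2 z₁ z₂)² = 4(r⁴ + 2r² cos(2θ) + 1)/(r² − 2r cos θ + 1)², so (1 − z₁² − z₂² + 2z₁)/√((1 + z₁² − z₂²)² + (2z₁z₂)²) = (r² − 2r cos θ − 1)/√((r² − 1)² + 4r² cos²θ). -/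
/-! With `D = 1 + r² - 2 r cos θ = |r - e^{iθ}|²`, the point `z₁ + i z₂` is `(r + e^{iθ}) / (r - e^{iθ})`.
Both left-hand sides are rational in `r`, `cos θ`, `sin θ` with powers of `D` as denominators, and
clearing them using `sin² θ + cos² θ = 1` gives the first two identities, the second in the form
`(2 / D)² ((r² - 1)² + 4 r² cos² θ)`. As `D > 0` whenever `sin θ ≠ 0`, the factor `2 / D` then
cancels between the numerator and the square root. -/

open Real

section Parametrization

variable {K : Type*} [Field K] {r c s z₁ z₂ : K}

theorem one_sub_sq_sub_sq_add_two_mul_eq (hsc : s ^ 2 + c ^ 2 = 1)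
    (hD : 1 + r ^ 2 - 2 * r * c ≠ 0)
    (hz₁ : z₁ = (r ^ 2 - 1) / (1 + r ^ 2 - 2 * r * c))
    (hz₂ : z₂ = 2 * r * s / (1 + r ^ 2 - 2 * r * c)) :
    1 - z₁ ^ 2 - z₂ ^ 2 + 2 * z₁ = 2 * (r ^ 2 - 2 * r * c - 1) / (1 + r ^ 2 - 2 * r * c) := by
  subst hz₁ hz₂
  -- `field_simp` uses `hD` only once the denominator is an atom
  generalize hDdef : 1 + r ^ 2 - 2 * r * c = D at *
  field_simp
  subst hDdef
  linear_combination (-4 * r ^ 2) * hsc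

theorem sq_one_add_sq_sub_sq_add_sq_two_mul_mul_eq (hsc : s ^ 2 + c ^ 2 = 1)
    (hD : 1 + r ^ 2 - 2 * r * c ≠ 0)
    (hz₁ : z₁ = (r ^ 2 - 1) / (1 + r ^ 2 - 2 * r * c))
    (hz₂ : z₂ = 2 * r * s / (1 + r ^ 2 - 2 * r * c)) :
    (1 + z₁ ^ 2 - z₂ ^ 2) ^ 2 + (2 * z₁ * z₂) ^ 2 =
      (2 / (1 + r ^ 2 - 2 * r * c)) ^ 2 * ((r ^ 2 - 1) ^ 2 + 4 * r ^ 2 * c ^ 2) := by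
  subst hz₁ hz₂
  generalize hDdef : 1 + r ^ 2 - 2 * r * c = D at *
  field_simp
  subst hDdef
  rw [show s ^ 2 = 1 - c ^ 2 by linear_combination hsc]
  ring

end Parametrization

theorem one_add_sq_sub_two_mul_mul_cos_pos (r : ℝ) {θ : ℝ} (hθ : sin θ ≠ 0) :
    0 < 1 + r ^ 2 - 2 * r * cos θ := by
  nlinarith [sin_sq_add_cos_sq θ, sq_nonneg (r - cos θ), pow_pos (abs_pos.2 hθ) 2, sq_abs (sin θ)]

theorem mul_div_sqrt_sq_mul {k : ℝ} (hk : 0 < k) (a b : ℝ) :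
    k * a / √(k ^ 2 * b) = a / √b := by
  rw [sqrt_mul (sq_nonneg k), sqrt_sq hk.le, mul_div_mul_left _ _ hk.ne']

theorem stmt_8_general (r θ z₁ z₂ : ℝ) (hθ : θ ∈ Set.Ioo (π / 2) π)
    (hz₁ : z₁ = (r ^ 2 - 1) / (1 + r ^ 2 - 2 * r * cos θ))
    (hz₂ : z₂ = 2 * r * sin θ / (1 + r ^ 2 - 2 * r * cos θ)) :
    1 - z₁ ^ 2 - z₂ ^ 2 + 2 * z₁ =
      2 * (r ^ 2 - 2 * r * cos θ - 1) / (1 + r ^ 2 - 2 * r * cos θ) ∧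
    (1 + z₁ ^ 2 - z₂ ^ 2) ^ 2 + (2 * z₁ * z₂) ^ 2 =
      4 * (r ^ 4 + 2 * r ^ 2 * cos (2 * θ) + 1) / (r ^ 2 - 2 * r * cos θ + 1) ^ 2 ∧
    (1 - z₁ ^ 2 - z₂ ^ 2 + 2 * z₁) /
        Real.sqrt ((1 + z₁ ^ 2 - z₂ ^ 2) ^ 2 + (2 * z₁ * z₂) ^ 2) =
      (r ^ 2 - 2 * r * cos θ - 1) /
        Real.sqrt ((r ^ 2 - 1) ^ 2 + 4 * r ^ 2 * cos θ ^ 2) := by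
  have hsin : sin θ ≠ 0 :=
    (sin_pos_of_pos_of_lt_pi (by linarith [hθ.1, pi_pos]) hθ.2).ne'
  have hD := one_add_sq_sub_two_mul_mul_cos_pos r hsin
  have hnum := one_sub_sq_sub_sq_add_two_mul_eq (sin_sq_add_cos_sq θ) hD.ne' hz₁ hz₂
  have hnorm := sq_one_add_sq_sub_sq_add_sq_two_mul_mul_eq (sin_sq_add_cos_sq θ) hD.ne' hz₁ hz₂
  refine ⟨hnum, ?_, ?_⟩
  · rw [hnorm, cos_two_mul, div_pow, sub_add_comm, add_comm _ (1 : ℝ)]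
    ring
  · rw [hnum, hnorm, mul_div_right_comm,
      mul_div_sqrt_sq_mul (div_pos two_pos hD)]

theorem stmt_8 (r θ z₁ z₂ : ℝ) (hr : 1 < r) (hθ : θ ∈ Set.Ioo (π / 2) π)
    (hz₁ : z₁ = (r ^ 2 - 1) / (1 + r ^ 2 - 2 * r * cos θ))
    (hz₂ : z₂ = 2 * r * sin θ / (1 + r ^ 2 - 2 * r * cos θ)) :
    1 - z₁ ^ 2 - z₂ ^ 2 + 2 * z₁ =
      2 * (r ^ 2 - 2 * r * cos θ - 1) / (1 + r ^ 2 - 2 * r * cos θ) ∧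
    (1 + z₁ ^ 2 - z₂ ^ 2) ^ 2 + (2 * z₁ * z₂) ^ 2 =
      4 * (r ^ 4 + 2 * r ^ 2 * cos (2 * θ) + 1) / (r ^ 2 - 2 * r * cos θ + 1) ^ 2 ∧
    (1 - z₁ ^ 2 - z₂ ^ 2 + 2 * z₁) /
        Real.sqrt ((1 + z₁ ^ 2 - z₂ ^ 2) ^ 2 + (2 * z₁ * z₂) ^ 2) =
      (r ^ 2 - 2 * r * cos θ - 1) /
        Real.sqrt ((r ^ 2 - 1) ^ 2 + 4 * r ^ 2 * cos θ ^ 2) :=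
  stmt_8_general r θ z₁ z₂ hθ hz₁ hz₂
end

section
/- Let K ⊂ ℝⁿ be a 0-symmetric convex body (compact, convex, nonempty interior, K = −K), U a linear subspace of ℝⁿ, and K° its polar body. Then R(K, Φ_U(K)) = R(K°, Φ_U(K°)), where R denotes the circumradius and Φ_U the reflection across U. -/
/-!
For a convex set `C` with `C = -C`, a translate `z + C` contains the symmetric set `K` only if
`C` does: each `x ∈ K` is the midpoint of `x - z ∈ C` and `x + z ∈ -C = C`. So both circumradii
are infima of `{t > 0 | K ⊆ t • Φ K}`. Polarity reverses inclusions, turns `t •` into `t⁻¹ •` and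
commutes with orthogonal maps, so `K ⊆ t • Φ K` gives `K° ⊆ t • Φ⁻¹ K°`; by the bipolar theorem
`K°° = K` this is an equivalence, and `Φ⁻¹ = Φ` for a reflection.
-/

open Pointwise RealInnerProductSpace

/-- The circumradius of `K` with respect to `C`: the smallest `t > 0` such that a
translate of `t • C` contains `K`. -/
noncomputable def circumradius {n : ℕ} (K C : Set (EuclideanSpace ℝ (Fin n))) : ℝ :=
  sInf {t : ℝ | 0 < t ∧ ∃ z : EuclideanSpace ℝ (Fin n), K ⊆ {z} + t • C}

section Translate

variable {E : Type*} [AddCommGroup E] [Module ℝ E]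

theorem exists_add_subset_iff_subset {K C : Set E} (hK : ∀ x ∈ K, -x ∈ K)
    (hC : ∀ c ∈ C, -c ∈ C) (hCc : Convex ℝ C) : (∃ z : E, K ⊆ {z} + C) ↔ K ⊆ C := by
  refine ⟨fun ⟨z, hz⟩ x hx => ?_, fun h => ⟨0, by simpa using h⟩⟩
  obtain ⟨c₁, hc₁, hxc₁⟩ := Set.singleton_add.subset (hz hx)
  obtain ⟨c₂, hc₂, hxc₂⟩ := Set.singleton_add.subset (hz (hK x hx))
  have hx : (1 / 2 : ℝ) • c₁ + (1 / 2 : ℝ) • -c₂ = x := by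
    rw [← sub_eq_iff_eq_add'.mpr hxc₁.symm, ← sub_eq_iff_eq_add'.mpr hxc₂.symm]
    module
  exact hx ▸ hCc hc₁ (hC c₂ hc₂) (by norm_num) (by norm_num) (by norm_num)

theorem Convex.zero_mem_of_neg_mem {K : Set E} (hKc : Convex ℝ K) (hK : ∀ x ∈ K, -x ∈ K)
    (hne : K.Nonempty) : (0 : E) ∈ K := by
  obtain ⟨x, hx⟩ := hne
  simpa using hKc hx (hK x hx) (a := 1 / 2) (b := 1 / 2) (by norm_num) (by norm_num) (by norm_num)

end Translate

section Polar

variable {E : Type*} [NormedAddCommGroup E] [InnerProductSpace ℝ E]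

def innerPolar (K : Set E) : Set E :=
  {a | ∀ x ∈ K, ⟪a, x⟫ ≤ 1}

theorem neg_mem_innerPolar {K : Set E} (hK : ∀ x ∈ K, -x ∈ K) {a : E} (ha : a ∈ innerPolar K) :
    -a ∈ innerPolar K := fun x hx => by
  simpa [inner_neg_left, ← inner_neg_right] using ha (-x) (hK x hx)

theorem convex_innerPolar (K : Set E) : Convex ℝ (innerPolar K) := by
  simp only [innerPolar, Set.ofPred_forall]
  exact convex_iInter₂ fun x _ => by
    simpa [real_inner_comm] using convex_halfSpace_le (innerₗ E x).isLinear 1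

theorem innerPolar_innerPolar [CompleteSpace E] {K : Set E} (hKc : Convex ℝ K)
    (hKcl : IsClosed K) (h0 : (0 : E) ∈ K) : innerPolar (innerPolar K) = K := by
  refine Set.Subset.antisymm (fun y hy => ?_) fun x hx a ha => real_inner_comm a x ▸ ha x hx
  by_contra hyK
  obtain ⟨f, u, hfK, hfy⟩ := geometric_hahn_banach_closed_point hKc hKcl hyK
  have hu : 0 < u := by simpa using hfK 0 h0
  set v := (InnerProductSpace.toDual ℝ E).symm f
  have hv : ∀ x, ⟪v, x⟫ = f x := fun x => InnerProductSpace.toDual_symm_apply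
  have hmem : u⁻¹ • v ∈ innerPolar K := fun x hx => by
    rw [real_inner_smul_left, hv, inv_mul_le_one₀ hu]
    exact (hfK x hx).le
  have := hy _ hmem
  rw [real_inner_comm, real_inner_smul_left, hv, inv_mul_le_one₀ hu] at this
  linarith

theorem innerPolar_subset_smul_image_symm (Φ : E ≃ₗᵢ[ℝ] E) {t : ℝ} (ht : 0 < t) {K : Set E}
    (h : K ⊆ t • Φ '' K) : innerPolar K ⊆ t • Φ.symm '' innerPolar K := by
  intro a ha
  refine ⟨Φ.symm (t⁻¹ • Φ a), ⟨t⁻¹ • Φ a, fun x hx => ?_, rfl⟩, by simp [smul_smul, ht.ne']⟩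
  obtain ⟨_, ⟨y, hy, rfl⟩, rfl⟩ := h hx
  rw [real_inner_smul_left, real_inner_smul_right, LinearIsometryEquiv.inner_map_map,
    inv_mul_cancel_left₀ ht.ne']
  exact ha y hy

theorem subset_smul_image_iff_innerPolar [CompleteSpace E] (Φ : E ≃ₗᵢ[ℝ] E) {t : ℝ} (ht : 0 < t)
    {K : Set E} (hKc : Convex ℝ K) (hKcl : IsClosed K) (h0 : (0 : E) ∈ K) :
    K ⊆ t • Φ '' K ↔ innerPolar K ⊆ t • Φ.symm '' innerPolar K :=
  ⟨innerPolar_subset_smul_image_symm Φ ht, fun h => by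
    simpa [innerPolar_innerPolar hKc hKcl h0] using innerPolar_subset_smul_image_symm Φ.symm ht h⟩

end Polar

theorem circumradius_image_eq_sInf {n : ℕ}
    (Φ : EuclideanSpace ℝ (Fin n) ≃ₗᵢ[ℝ] EuclideanSpace ℝ (Fin n))
    {K : Set (EuclideanSpace ℝ (Fin n))} (hKc : Convex ℝ K) (hK : ∀ x ∈ K, -x ∈ K) :
    circumradius K (Φ '' K) = sInf {t : ℝ | 0 < t ∧ K ⊆ t • Φ '' K} := by
  have hC : ∀ t : ℝ, ∀ c ∈ t • Φ '' K, -c ∈ t • Φ '' K := by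
    rintro t _ ⟨_, ⟨x, hx, rfl⟩, rfl⟩
    exact ⟨Φ (-x), ⟨-x, hK x hx, rfl⟩, by simp⟩
  unfold circumradius
  congr 1
  ext t
  exact and_congr_right fun _ =>
    exists_add_subset_iff_subset hK (hC t) ((hKc.linear_image Φ.toLinearMap).smul t)

theorem stmt_12 (n : ℕ) (K : Set (EuclideanSpace ℝ (Fin n)))
    (hK : IsCompact K) (hKc : Convex ℝ K) (hKint : (interior K).Nonempty)
    (hsymm : K = -K) (U : Submodule ℝ (EuclideanSpace ℝ (Fin n))) :
    circumradius K ((U.reflection) '' K) =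
      circumradius {a : EuclideanSpace ℝ (Fin n) | ∀ x ∈ K, ⟪a, x⟫ ≤ 1}
        ((U.reflection) '' {a : EuclideanSpace ℝ (Fin n) | ∀ x ∈ K, ⟪a, x⟫ ≤ 1}) := by
  have hneg : ∀ x ∈ K, -x ∈ K := fun x hx => by
    rw [hsymm]
    exact Set.neg_mem_neg.mpr hx
  have h0 : 0 ∈ K := hKc.zero_mem_of_neg_mem hneg (hKint.mono interior_subset)
  change circumradius K (U.reflection '' K) =
    circumradius (innerPolar K) (U.reflection '' innerPolar K)
  rw [circumradius_image_eq_sInf _ hKc hneg,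
    circumradius_image_eq_sInf _ (convex_innerPolar K) fun a => neg_mem_innerPolar hneg]
  congr 1
  ext t
  refine and_congr_right fun ht => ?_
  simpa using subset_smul_image_iff_innerPolar U.reflection ht hKc hK.isClosed h0
end

section
/- The supremum of min{z/y, y/x, 1 + (y² − x²)/z²} over all triples 0 < x < y < z with z < x + y equals √2, and the supremum is not attained; moreover the set of values of this minimum over all such triples is exactly the open interval (1, √2). -/
/-!
Each of the three ratios exceeds 1 on a scalene triangle `x < y < z`. They cannot all reach `√2`:
`z ≥ √2 y` together with the triangle inequality gives `x > (√2 - 1) y`, hence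
`y² - x² < 2 (√2 - 1) y² ≤ (√2 - 1) z²`, i.e. the third ratio is below `√2`.
Conversely every `m ∈ (1, √2)` is the value at the triangle `(m (2 - m), 2, 2m)`.
-/

open Real Set

/-- For a scalene triangle with sides `x < y < z` this is its first Minkowski chirality `α₁`. -/
noncomputable def chiralityRatio (x y z : ℝ) : ℝ :=
  min (z / y) (min (y / x) (1 + (y ^ 2 - x ^ 2) / z ^ 2))

lemma one_lt_chiralityRatio {x y z : ℝ} (hx : 0 < x) (hxy : x < y) (hyz : y < z) :
    1 < chiralityRatio x y z := by
  have hy : 0 < y := hx.trans hxy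
  have hxy2 : 0 < (y ^ 2 - x ^ 2) / z ^ 2 := div_pos (by nlinarith) (by nlinarith)
  exact lt_min ((one_lt_div hy).2 hyz) (lt_min ((one_lt_div hx).2 hxy) (by linarith))

lemma min_div_one_add_lt_sqrt_two {x y z : ℝ} (hy : 0 < y) (hz : z < x + y) :
    min (z / y) (1 + (y ^ 2 - x ^ 2) / z ^ 2) < √2 := by
  by_contra! h
  have hs : √2 ^ 2 = 2 := sq_sqrt zero_le_two
  have hs1 : 1 < √2 := one_lt_sqrt_two
  have hzy : √2 * y ≤ z := (le_div_iff₀ hy).1 (h.trans (min_le_left _ _))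
  have hz0 : 0 < z := by nlinarith
  have hthird : (√2 - 1) * z ^ 2 ≤ y ^ 2 - x ^ 2 :=
    (le_div_iff₀ (by positivity)).1 (by linarith [h.trans (min_le_right _ _)])
  have hz2 : 2 * y ^ 2 ≤ z ^ 2 := by
    nlinarith [mul_self_le_mul_self (by positivity : 0 ≤ √2 * y) hzy]
  have hx : (√2 - 1) * y < x := by linarith
  have hx2 : ((√2 - 1) * y) ^ 2 < x ^ 2 := by
    gcongr
  nlinarith

lemma chiralityRatio_lt_sqrt_two {x y z : ℝ} (hy : 0 < y) (hz : z < x + y) :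
    chiralityRatio x y z < √2 :=
  (min_le_min_left _ (min_le_right _ _)).trans_lt (min_div_one_add_lt_sqrt_two hy hz)

lemma chiralityRatio_witness {m : ℝ} (hm : 1 < m) (hm2 : m ^ 2 < 2) :
    chiralityRatio (m * (2 - m)) 2 (2 * m) = m := by
  have hx : 0 < m * (2 - m) := by nlinarith
  have hzy : 2 * m / 2 = m := by ring
  have hyx : m ≤ 2 / (m * (2 - m)) := by
    rw [le_div_iff₀ hx]
    nlinarith [sq_nonneg (m - 4 / 3)]
  have hthird : m ≤ 1 + (2 ^ 2 - (m * (2 - m)) ^ 2) / (2 * m) ^ 2 := by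
    rw [← sub_le_iff_le_add', le_div_iff₀ (by positivity)]
    nlinarith [mul_pos (by linarith : (0 : ℝ) < 2 - m ^ 2) (by linarith : (0 : ℝ) < m)]
  rw [chiralityRatio, hzy, min_eq_left (le_min hyx hthird)]

theorem setOf_chiralityRatio_eq_Ioo :
    {m : ℝ | ∃ x y z : ℝ, 0 < x ∧ x < y ∧ y < z ∧ z < x + y ∧ m = chiralityRatio x y z} =
      Ioo 1 √2 := by
  ext m
  constructor
  · rintro ⟨x, y, z, hx, hxy, hyz, hz, rfl⟩
    exact ⟨one_lt_chiralityRatio hx hxy hyz, chiralityRatio_lt_sqrt_two (hx.trans hxy) hz⟩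
  · rintro ⟨hm, hms⟩
    have hm2 : m ^ 2 < 2 := by
      nlinarith [sq_sqrt (zero_le_two : (0 : ℝ) ≤ 2)]
    exact ⟨m * (2 - m), 2, 2 * m, by nlinarith, by nlinarith, by linarith, by nlinarith,
      (chiralityRatio_witness hm hm2).symm⟩

theorem stmt_15 :
    {m : ℝ | ∃ x y z : ℝ, 0 < x ∧ x < y ∧ y < z ∧ z < x + y ∧
        m = min (z / y) (min (y / x) (1 + (y ^ 2 - x ^ 2) / z ^ 2))} =
      Set.Ioo 1 (Real.sqrt 2) ∧
    IsLUB {m : ℝ | ∃ x y z : ℝ, 0 < x ∧ x < y ∧ y < z ∧ z < x + y ∧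
        m = min (z / y) (min (y / x) (1 + (y ^ 2 - x ^ 2) / z ^ 2))} (Real.sqrt 2) ∧
    Real.sqrt 2 ∉ {m : ℝ | ∃ x y z : ℝ, 0 < x ∧ x < y ∧ y < z ∧ z < x + y ∧
        m = min (z / y) (min (y / x) (1 + (y ^ 2 - x ^ 2) / z ^ 2))} := by
  have h := setOf_chiralityRatio_eq_Ioo
  unfold chiralityRatio at h
  rw [h]
  exact ⟨rfl, isLUB_Ioo one_lt_sqrt_two, fun hs => hs.2.false⟩
end

section
/- For all 0 < x ≤ y ≤ z with z < x + y: if y/z ≤ 1/√2 then 1 + (y² − x²)/z² < 2y/z ≤ √2, and if y/z > 1/√2 then z/y < √2. Hence min{z/y, 1 + (y² − x²)/z²} < √2. -/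
theorem stmt_16 (x y z : ℝ) (hx : 0 < x) (hxy : x ≤ y) (hyz : y ≤ z) (htri : z < x + y) :
    (y / z ≤ 1 / Real.sqrt 2 →
      1 + (y ^ 2 - x ^ 2) / z ^ 2 < 2 * y / z ∧ 2 * y / z ≤ Real.sqrt 2) ∧
    (1 / Real.sqrt 2 < y / z → z / y < Real.sqrt 2) ∧
    min (z / y) (1 + (y ^ 2 - x ^ 2) / z ^ 2) < Real.sqrt 2 := by
  have hy : 0 < y := lt_of_lt_of_le hx hxy
  have hz : 0 < z := lt_of_lt_of_le hy hyz
  have hs : (0:ℝ) < Real.sqrt 2 := Real.sqrt_pos.mpr (by norm_num)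
  have hs2 : Real.sqrt 2 * Real.sqrt 2 = 2 := Real.mul_self_sqrt (by norm_num)
  have hz2 : (0:ℝ) < z ^ 2 := by positivity
  have hsq : (z - y) ^ 2 < x ^ 2 := by nlinarith
  have key : 1 + (y ^ 2 - x ^ 2) / z ^ 2 < 2 * y / z := by
    have h1 : 2 * y / z - (1 + (y ^ 2 - x ^ 2) / z ^ 2) = (x ^ 2 - (z - y) ^ 2) / z ^ 2 := by
      field_simp; ring
    have h2 : 0 < (x ^ 2 - (z - y) ^ 2) / z ^ 2 := div_pos (by linarith) hz2
    linarith
  have part2 : 1 / Real.sqrt 2 < y / z → z / y < Real.sqrt 2 := by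
    intro h
    rw [div_lt_div_iff₀ hs hz] at h
    rw [div_lt_iff₀ hy]
    nlinarith
  refine ⟨fun h => ⟨key, ?_⟩, part2, ?_⟩
  · rw [div_le_div_iff₀ hz hs] at h
    rw [div_le_iff₀ hz]
    nlinarith
  · rcases le_or_gt (y / z) (1 / Real.sqrt 2) with h | h
    · have h2 : 2 * y / z ≤ Real.sqrt 2 := by
        rw [div_le_div_iff₀ hz hs] at h
        rw [div_le_iff₀ hz]
        nlinarith
      exact lt_of_le_of_lt (min_le_right _ _) (lt_of_lt_of_le key h2)
    · exact lt_of_le_of_lt (min_le_left _ _) (part2 h)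
end

section
/- The polynomial y⁴ + y³ − 1 has exactly one positive real root y₀, and y₀ ∈ (√2/2, 1). Moreover, for y = y₀ and x = y₀², the three quantities y/x, 1/y, and 1 + y² − x² are all equal. -/
theorem stmt_18 :
    (∃! y : ℝ, 0 < y ∧ y ^ 4 + y ^ 3 = 1) ∧
    ∀ y : ℝ, 0 < y → y ^ 4 + y ^ 3 = 1 →
      Real.sqrt 2 / 2 < y ∧ y < 1 ∧
      y / y ^ 2 = 1 / y ∧ 1 / y = 1 + y ^ 2 - (y ^ 2) ^ 2 := by
  have hmono : ∀ a b : ℝ, 0 < a → a < b → a ^ 4 + a ^ 3 < b ^ 4 + b ^ 3 := by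
    intro a b ha hab
    have h4 := pow_lt_pow_left₀ hab ha.le (by norm_num : (4:ℕ) ≠ 0)
    have h3 := pow_lt_pow_left₀ hab ha.le (by norm_num : (3:ℕ) ≠ 0)
    linarith
  have huniq : ∀ a b : ℝ, (0 < a ∧ a ^ 4 + a ^ 3 = 1) →
      (0 < b ∧ b ^ 4 + b ^ 3 = 1) → a = b := by
    rintro a b ⟨ha, hae⟩ ⟨hb, hbe⟩
    rcases lt_trichotomy a b with h|h|h
    · have := hmono a b ha h; linarith
    · exact h
    · have := hmono b a hb h; linarith
  have hex : ∃ y : ℝ, 0 < y ∧ y ^ 4 + y ^ 3 = 1 := by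
    have hcont : ContinuousOn (fun y : ℝ => y ^ 4 + y ^ 3) (Set.Icc 0 1) := by
      fun_prop
    have h01 : (1:ℝ) ∈ Set.Icc ((0:ℝ) ^ 4 + 0 ^ 3) ((1:ℝ) ^ 4 + 1 ^ 3) := by
      norm_num
    obtain ⟨y, hy, hye⟩ := intermediate_value_Icc (by norm_num) hcont h01
    refine ⟨y, ?_, hye⟩
    rcases hy.1.lt_or_eq with h|h
    · exact h
    · exfalso; rw [← h] at hye; norm_num at hye
  refine ⟨?_, ?_⟩
  · obtain ⟨y, hy⟩ := hex
    exact ⟨y, hy, fun z hz => huniq z y hz hy⟩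
  · intro y hy hye
    have hy1 : y < 1 := by
      by_contra h
      push_neg at h
      have h4 : (1:ℝ) ≤ y ^ 4 := one_le_pow₀ h
      have h3 : (1:ℝ) ≤ y ^ 3 := one_le_pow₀ h
      linarith
    have hs : Real.sqrt 2 ^ 2 = 2 := Real.sq_sqrt (by norm_num)
    have hsn : (0:ℝ) ≤ Real.sqrt 2 := Real.sqrt_nonneg 2
    have hslt : Real.sqrt 2 < 1.5 := by
      nlinarith
    have hy2 : Real.sqrt 2 / 2 < y := by
      by_contra h
      push_neg at h
      have h4 := pow_le_pow_left₀ hy.le h 4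
      have h3 := pow_le_pow_left₀ hy.le h 3
      have e4 : (Real.sqrt 2 / 2) ^ 4 = 1 / 4 := by
        nlinarith
      have e3 : (Real.sqrt 2 / 2) ^ 3 = Real.sqrt 2 / 4 := by
        nlinarith
      rw [e4] at h4
      rw [e3] at h3
      linarith
    have hyne : y ≠ 0 := ne_of_gt hy
    refine ⟨hy2, hy1, ?_, ?_⟩
    · field_simp
    · field_simp
      linear_combination (y - 1) * hye
end
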